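/- Let Θ ⊆ ℝ^d and C ∈ [1,∞). Assume Θ is C-quasi permeable, i.e., for all x, y ∈ ℝ^d and all δ > 0, x and y can be connected by a path γ in ℝ^d with ℓ(γ) ≤ C‖y − x‖ + δ such that the closure of (image γ) ∩ Θ is countable. If Θ is contained in a closed Lebesgue nullset, then Θ is permeable. -/

import Mathlib

open Set MeasureTheory
open scoped ENNReal

/-- The length (total variation w.r.t. the Euclidean norm) of a path `γ` over `[a,b]`,
as the supremum over partitions `a = t₀ ≤ t₁ ≤ … ≤ tₙ = b` of the sums of norms of
increments. -/
noncomputable def pathLen {d : ℕ} (γ : ℝ → EuclideanSpace ℝ (Fin d)) (a b : ℝ) : ℝ≥0∞ :=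
  ⨆ n : ℕ, ⨆ t : {t : ℕ → ℝ // Monotone t ∧ t 0 = a ∧ t n = b},
    ∑ i ∈ Finset.range n, ENNReal.ofReal ‖γ (t.1 (i + 1)) - γ (t.1 i)‖

/-- `Θ ⊆ ℝ^d` is null permeable: for all `x, y` and `δ > 0` there is a path from `x` to `y`
of length at most `‖y - x‖ + δ` meeting `Θ` at most in `{x, y}`. -/
def NullPermeable {d : ℕ} (Θ : Set (EuclideanSpace ℝ (Fin d))) : Prop :=
  ∀ x y : EuclideanSpace ℝ (Fin d), ∀ δ : ℝ, 0 < δ →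
    ∃ (a b : ℝ) (γ : ℝ → EuclideanSpace ℝ (Fin d)),
      a < b ∧ ContinuousOn γ (Set.Icc a b) ∧ γ a = x ∧ γ b = y ∧
      pathLen γ a b ≤ ENNReal.ofReal (‖y - x‖ + δ) ∧
      γ '' Set.Icc a b ∩ Θ ⊆ {x, y}

/-- `Θ ⊆ ℝ^d` is permeable: for all `x, y` and `δ > 0` there is a path from `x` to `y`
of length at most `‖y - x‖ + δ` such that the closure of its intersection with `Θ`
is countable. -/
def Permeable {d : ℕ} (Θ : Set (EuclideanSpace ℝ (Fin d))) : Prop :=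
  ∀ x y : EuclideanSpace ℝ (Fin d), ∀ δ : ℝ, 0 < δ →
    ∃ (a b : ℝ) (γ : ℝ → EuclideanSpace ℝ (Fin d)),
      a < b ∧ ContinuousOn γ (Set.Icc a b) ∧ γ a = x ∧ γ b = y ∧
      pathLen γ a b ≤ ENNReal.ofReal (‖y - x‖ + δ) ∧
      (closure (γ '' Set.Icc a b ∩ Θ)).Countable

/-!
Call a path admissible if the closure of its trace on `Θ` is countable, and let `admissibleDist`
be the infimum of the lengths of admissible paths. It satisfies the triangle inequality, since
concatenation preserves admissibility, and `C`-quasi permeability says that it is at most `C`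
times the distance.

Given `x`, `y`, Fubini's theorem provides arbitrarily small translates `v + [x, y]` of the
segment that meet the closed null set `F ⊇ Θ` only in a compact null set of parameters. Cut such
a translate into `N` equal cells: those meeting this set have total length at most `ε`, so
crossing them along quasi-geodesics and all others straight (these miss `Θ`) costs at most
`(1 + C ε) ‖y - x‖`. Joining `x` and `y` to the ends of the translate by two more quasi-geodesics
adds only `2 C ‖v‖`.
-/

structure AdmissiblePath {E : Type*} [EMetricSpace E] (Θ : Set E) (x y : E) where
  toFun : ℝ → E
  left : ℝ
  right : ℝ
  left_lt_right : left < right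
  continuousOn : ContinuousOn toFun (Icc left right)
  source : toFun left = x
  target : toFun right = y
  countable_closure_inter : (closure (toFun '' Icc left right ∩ Θ)).Countable

namespace AdmissiblePath

variable {E : Type*} [EMetricSpace E] {Θ : Set E} {x y z : E}

noncomputable def length (γ : AdmissiblePath Θ x y) : ℝ≥0∞ :=
  eVariationOn γ.toFun (Icc γ.left γ.right)

def refl (Θ : Set E) (x : E) : AdmissiblePath Θ x x where
  toFun _ := x
  left := 0
  right := 1
  left_lt_right := zero_lt_one
  continuousOn := continuousOn_const
  source := rfl
  target := rfl
  countable_closure_inter := (countable_singleton x).mono <|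
    closure_minimal (inter_subset_left.trans (image_subset_iff.2 fun _ _ => mem_singleton x))
      isClosed_singleton

theorem length_refl : (refl Θ x).length = 0 :=
  eVariationOn.constant_on (f := fun _ => x)
    (subsingleton_singleton.anti (image_subset_iff.2 fun _ _ => rfl))

noncomputable def glue {α : Type*} (f g : ℝ → α) (b c t : ℝ) : α :=
  if t ≤ b then f t else g (t - b + c)

theorem glue_eqOn_left {α : Type*} (f g : ℝ → α) (b c : ℝ) : EqOn (glue f g b c) f (Iic b) :=
  fun _ ht => if_pos ht

theorem glue_eqOn_right {α : Type*} {f g : ℝ → α} {b c : ℝ} (h : f b = g c) :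
    EqOn (glue f g b c) (g ∘ (· - b + c)) (Ici b) := by
  intro t ht
  rcases (mem_Ici.1 ht).eq_or_lt with rfl | hbt
  · simp [glue, h]
  · exact if_neg hbt.not_ge

section trans

variable (γ : AdmissiblePath Θ x y) (γ' : AdmissiblePath Θ y z)

private theorem glue_eqOn_Ici :
    EqOn (glue γ.toFun γ'.toFun γ.right γ'.left) (γ'.toFun ∘ (· - γ.right + γ'.left))
      (Ici γ.right) :=
  glue_eqOn_right (γ.target.trans γ'.source.symm)

private theorem mapsTo_shift_Icc :
    MapsTo (· - γ.right + γ'.left) (Icc γ.right (γ.right + (γ'.right - γ'.left)))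
      (Icc γ'.left γ'.right) :=
  fun t ht => ⟨by linarith [ht.1], by linarith [ht.2]⟩

private theorem Icc_eq_union_Icc :
    Icc γ.left (γ.right + (γ'.right - γ'.left)) =
      Icc γ.left γ.right ∪ Icc γ.right (γ.right + (γ'.right - γ'.left)) :=
  (Icc_union_Icc_eq_Icc γ.left_lt_right.le (by linarith [γ'.left_lt_right])).symm

noncomputable def trans : AdmissiblePath Θ x z where
  toFun := glue γ.toFun γ'.toFun γ.right γ'.left
  left := γ.left
  right := γ.right + (γ'.right - γ'.left)
  left_lt_right := by linarith [γ.left_lt_right, γ'.left_lt_right]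
  continuousOn := by
    rw [Icc_eq_union_Icc]
    refine ContinuousOn.union_of_isClosed ?_ ?_ isClosed_Icc isClosed_Icc
    · exact γ.continuousOn.congr ((glue_eqOn_left _ _ _ _).mono Icc_subset_Iic_self)
    · refine ContinuousOn.congr ?_ ((glue_eqOn_Ici γ γ').mono Icc_subset_Ici_self)
      exact γ'.continuousOn.comp (by fun_prop) (mapsTo_shift_Icc γ γ')
  source := by rw [glue_eqOn_left _ _ _ _ γ.left_lt_right.le, γ.source]
  target := by
    rw [glue_eqOn_Ici γ γ' (by simp [γ'.left_lt_right.le] : _ ∈ Ici γ.right)]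
    simp [γ'.target]
  countable_closure_inter := by
    refine (γ.countable_closure_inter.union γ'.countable_closure_inter).mono ?_
    rw [← closure_union, ← union_inter_distrib_right]
    refine closure_mono (inter_subset_inter_left _ ?_)
    rw [Icc_eq_union_Icc, image_union,
      ((glue_eqOn_left _ _ _ _).mono Icc_subset_Iic_self).image_eq,
      ((glue_eqOn_Ici γ γ').mono Icc_subset_Ici_self).image_eq, image_comp]
    exact union_subset_union_right _ (image_mono (mapsTo_shift_Icc γ γ').image_subset)

theorem length_trans_le : (γ.trans γ').length ≤ γ.length + γ'.length := by
  have hsplit := eVariationOn.Icc_add_Icc (glue γ.toFun γ'.toFun γ.right γ'.left) (s := univ)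
    γ.left_lt_right.le
    (by linarith [γ'.left_lt_right] : γ.right ≤ γ.right + (γ'.right - γ'.left)) (mem_univ _)
  simp only [univ_inter] at hsplit
  change eVariationOn (glue γ.toFun γ'.toFun γ.right γ'.left)
    (Icc γ.left (γ.right + (γ'.right - γ'.left))) ≤ _
  rw [← hsplit]
  gcongr
  · exact (eVariationOn.eq_of_eqOn ((glue_eqOn_left _ _ _ _).mono Icc_subset_Iic_self)).le
  · rw [eVariationOn.eq_of_eqOn ((glue_eqOn_Ici γ γ').mono Icc_subset_Ici_self)]
    exact eVariationOn.comp_le_of_monotoneOn _ _ (fun _ _ _ _ h => by simpa using h)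
      (mapsTo_shift_Icc γ γ')

end trans

end AdmissiblePath

section admissibleDist

variable {E : Type*} [EMetricSpace E] {Θ : Set E} {x y z : E}

noncomputable def admissibleDist (Θ : Set E) (x y : E) : ℝ≥0∞ :=
  ⨅ γ : AdmissiblePath Θ x y, γ.length

theorem admissibleDist_le_length (γ : AdmissiblePath Θ x y) : admissibleDist Θ x y ≤ γ.length :=
  iInf_le _ γ

@[simp]
theorem admissibleDist_self : admissibleDist Θ x x = 0 :=
  nonpos_iff_eq_zero.1 <| (admissibleDist_le_length _).trans_eq AdmissiblePath.length_refl

theorem admissibleDist_triangle :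
    admissibleDist Θ x z ≤ admissibleDist Θ x y + admissibleDist Θ y z :=
  ENNReal.le_iInf_add_iInf fun γ γ' =>
    (admissibleDist_le_length _).trans (γ.length_trans_le γ')

theorem admissibleDist_le_sum (p : ℕ → E) (n : ℕ) :
    admissibleDist Θ (p 0) (p n) ≤ ∑ i ∈ Finset.range n, admissibleDist Θ (p i) (p (i + 1)) := by
  induction n with
  | zero => simp
  | succ n ih =>
    rw [Finset.sum_range_succ]
    exact admissibleDist_triangle.trans (add_le_add_left ih _)

end admissibleDist

section lineMap

open AffineMap

variable {E : Type*} [NormedAddCommGroup E] [NormedSpace ℝ E] {Θ : Set E}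

theorem admissibleDist_lineMap_le (x y : E) {s t : ℝ} (hst : s < t)
    (hΘ : Disjoint (lineMap x y '' Icc s t) Θ) :
    admissibleDist Θ (lineMap x y s) (lineMap x y t) ≤ ENNReal.ofReal ((t - s) * dist x y) := by
  let γ : AdmissiblePath Θ (lineMap x y s) (lineMap x y t) :=
    ⟨lineMap x y, s, t, hst, (lineMap_continuous).continuousOn, rfl, rfl, by simp [hΘ.inter_eq]⟩
  calc admissibleDist Θ (lineMap x y s) (lineMap x y t)
        ≤ eVariationOn (lineMap x y ∘ id) (Icc s t) := admissibleDist_le_length γ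
    _ ≤ nndist x y * eVariationOn id (Icc s t) :=
        ((lipschitzWith_lineMap x y).lipschitzOnWith (s := univ)).comp_eVariationOn_le
          (mapsTo_univ _ _)
    _ = ENNReal.ofReal ((t - s) * dist x y) := by
        rw [eVariationOn_id_Icc, mul_comm, ENNReal.ofReal_mul (sub_nonneg.2 hst.le),
          ← edist_nndist, edist_dist]

end lineMap

theorem exists_finset_card_le_of_isCompact_of_volume_eq_zero {K : Set ℝ} (hK : IsCompact K)
    (hK0 : volume K = 0) {ε : ℝ} (hε : 0 < ε) :
    ∃ N : ℕ, 0 < N ∧ ∃ B ⊆ Finset.range N,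
      (∀ j < N, (Icc (j / N : ℝ) ((j + 1) / N) ∩ K).Nonempty → j ∈ B) ∧ (B.card : ℝ) ≤ ε * N := by
  classical
  obtain ⟨U, hKU, hU, hUε⟩ := K.exists_isOpen_lt_of_lt (μ := volume) (ENNReal.ofReal ε)
    (by rwa [hK0, ENNReal.ofReal_pos])
  obtain ⟨r, hr, hrU⟩ := hK.exists_thickening_subset_open hU hKU
  obtain ⟨n, hn⟩ := exists_nat_one_div_lt hr
  set N := n + 1
  have hN : (0 : ℝ) < N := by positivity
  have hNr : 1 / (N : ℝ) < r := by simpa [N] using hn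
  let I : ℕ → Set ℝ := fun j => Ioc (j / N : ℝ) ((j + 1) / N)
  set B := (Finset.range N).filter fun j : ℕ => (Icc (j / N : ℝ) ((j + 1) / N) ∩ K).Nonempty
  refine ⟨N, n.succ_pos, B, Finset.filter_subset _ _,
    fun j hj hjK => Finset.mem_filter.2 ⟨Finset.mem_range.2 hj, hjK⟩, ?_⟩
  -- a cell of length `1 / N < r` meeting `K` lies in the `r`-thickening of `K`, hence in `U`
  have hIU : ∀ j ∈ B, I j ⊆ U := by
    intro j hj s hs
    obtain ⟨t, ht, htK⟩ := (Finset.mem_filter.1 hj).2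
    refine hrU (Metric.mem_thickening_iff.2 ⟨t, htK, ?_⟩)
    have : ((j : ℝ) + 1) / N - j / N = 1 / N := by ring
    rw [Real.dist_eq, abs_lt]
    constructor <;> linarith [hs.1, hs.2, ht.1, ht.2]
  have hdisj : (B : Set ℕ).PairwiseDisjoint I := by
    have := (show Monotone fun j : ℕ => (j / N : ℝ) from fun i j hij =>
      div_le_div_of_nonneg_right (Nat.cast_le.2 hij) hN.le).pairwise_disjoint_on_Ioc_succ
    exact fun i _ j _ hij => by simpa [I, Function.onFun] using this hij
  have : ENNReal.ofReal (B.card / N) ≤ ENNReal.ofReal ε :=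
    calc ENNReal.ofReal (B.card / N) = ∑ j ∈ B, volume (I j) := by
          have hI : ∀ j, volume (I j) = ENNReal.ofReal (1 / N) := fun j => by
            rw [Real.volume_Ioc]; ring_nf
          rw [Finset.sum_congr rfl fun j _ => hI j, Finset.sum_const, nsmul_eq_mul,
            ← ENNReal.ofReal_natCast, ← ENNReal.ofReal_mul (Nat.cast_nonneg _), mul_one_div]
      _ = volume (⋃ j ∈ B, I j) := (measure_biUnion_finset hdisj fun _ _ => measurableSet_Ioc).symm
      _ ≤ ENNReal.ofReal ε := (measure_mono (iUnion₂_subset hIU)).trans hUε.le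
  rwa [ENNReal.ofReal_le_ofReal_iff hε.le, div_le_iff₀ hN] at this

section fubini

open AffineMap

variable {E : Type*} [NormedAddCommGroup E] [NormedSpace ℝ E] [MeasurableSpace E] [BorelSpace E]
  {μ : Measure E} [μ.IsAddRightInvariant] [SFinite μ] {F : Set E}

theorem ae_volume_add_lineMap_mem_eq_zero (hF : MeasurableSet F) (hF0 : μ F = 0) (x y : E) :
    ∀ᵐ v ∂μ, volume {t : ℝ | v + lineMap x y t ∈ F} = 0 := by
  have hA : MeasurableSet {p : E × ℝ | p.1 + lineMap x y p.2 ∈ F} :=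
    hF.preimage (continuous_fst.add (lineMap_continuous.comp continuous_snd)).measurable
  have : μ.prod volume {p : E × ℝ | p.1 + lineMap x y p.2 ∈ F} = 0 := by
    rw [Measure.prod_apply_symm hA]
    have hslice : ∀ t : ℝ, μ {v | v + lineMap x y t ∈ F} = 0 := fun t =>
      (measure_preimage_add_right μ _ F).trans hF0
    simp [hslice]
  exact Measure.measure_ae_null_of_prod_null this

end fubini

theorem le_ofReal_of_forall_pos_le_ofReal_add_mul {a : ℝ≥0∞} {b c : ℝ} (hc : 0 ≤ c)
    (h : ∀ ε : ℝ, 0 < ε → a ≤ ENNReal.ofReal (b + ε * c)) : a ≤ ENNReal.ofReal b := by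
  refine ENNReal.le_of_forall_pos_le_add fun ε hε _ => ?_
  have hεc : ε / (c + 1) * c ≤ ε := by
    rw [div_mul_eq_mul_div, div_le_iff₀ (by positivity)]
    nlinarith [hε.le]
  calc a ≤ ENNReal.ofReal (b + ε / (c + 1) * c) := h _ (by positivity)
    _ ≤ ENNReal.ofReal (b + ε) := ENNReal.ofReal_le_ofReal (by linarith)
    _ ≤ ENNReal.ofReal b + ε := by simpa using ENNReal.ofReal_add_le (p := b) (q := ε)

section segment

open AffineMap

variable {E : Type*} [NormedAddCommGroup E] [NormedSpace ℝ E] {Θ F : Set E} {C : ℝ}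

theorem admissibleDist_le_dist_of_volume_lineMap_mem_eq_zero (hΘF : Θ ⊆ F) (hF : IsClosed F)
    (hC : 0 ≤ C) (hq : ∀ x y, admissibleDist Θ x y ≤ ENNReal.ofReal (C * dist x y)) {x y : E}
    (hxy : volume {t : ℝ | lineMap x y t ∈ F} = 0) :
    admissibleDist Θ x y ≤ ENNReal.ofReal (dist x y) := by
  set K := {t : ℝ | lineMap x y t ∈ F} ∩ Icc 0 1
  have hK : IsCompact K := isCompact_Icc.inter_left (hF.preimage lineMap_continuous)
  set ℓ := dist x y with hℓ
  refine le_ofReal_of_forall_pos_le_ofReal_add_mul (by positivity : 0 ≤ C * ℓ) fun ε hε => ?_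
  obtain ⟨N, hN, B, hBN, hbad, hB⟩ := exists_finset_card_le_of_isCompact_of_volume_eq_zero hK
    (measure_mono_null inter_subset_left hxy) hε
  have hN' : (0 : ℝ) < N := Nat.cast_pos.2 hN
  set p : ℕ → E := fun j => lineMap x y (j / N : ℝ)
  have hpiece : ∀ j ∈ Finset.range N, admissibleDist Θ (p j) (p (j + 1)) ≤
      ENNReal.ofReal ((1 + if j ∈ B then C else 0) * (ℓ / N)) := by
    intro j hj
    have hjN := Finset.mem_range.1 hj
    have hstep : ((j + 1 : ℕ) : ℝ) / N - j / N = 1 / N := by push_cast; ring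
    by_cases hjB : j ∈ B
    · refine (hq _ _).trans (ENNReal.ofReal_le_ofReal ?_)
      rw [if_pos hjB, dist_lineMap_lineMap, dist_comm, Real.dist_eq, hstep,
        abs_of_pos (by positivity), ← hℓ, one_div_mul_eq_div]
      linarith [show 0 ≤ ℓ / N by positivity]
    · rw [if_neg hjB, add_zero, one_mul, ← one_div_mul_eq_div, ← hstep]
      refine admissibleDist_lineMap_le x y (by linarith [hstep, one_div_pos.2 hN']) ?_
      refine Set.disjoint_left.2 ?_
      rintro _ ⟨t, ht, rfl⟩ htΘ
      have hj1 : ((j + 1 : ℕ) : ℝ) ≤ N := Nat.cast_le.2 hjN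
      refine hjB (hbad j hjN ⟨t, by simpa using ht, hΘF htΘ, ?_, ?_⟩)
      · exact (div_nonneg (Nat.cast_nonneg _) hN'.le).trans ht.1
      · exact ht.2.trans ((div_le_one hN').2 hj1)
  calc admissibleDist Θ x y = admissibleDist Θ (p 0) (p N) := by simp [p, hN'.ne']
    _ ≤ ∑ j ∈ Finset.range N, admissibleDist Θ (p j) (p (j + 1)) := admissibleDist_le_sum p N
    _ ≤ ∑ j ∈ Finset.range N, ENNReal.ofReal ((1 + if j ∈ B then C else 0) * (ℓ / N)) :=
        Finset.sum_le_sum hpiece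
    _ = ENNReal.ofReal ((N + B.card * C) * (ℓ / N)) := by
        rw [← ENNReal.ofReal_sum_of_nonneg fun j _ => by positivity, ← Finset.sum_mul,
          Finset.sum_add_distrib, Finset.sum_ite_mem, Finset.inter_eq_right.2 hBN]
        simp
    _ = ENNReal.ofReal (ℓ + B.card / N * (C * ℓ)) := by congr 1; field_simp
    _ ≤ ENNReal.ofReal (ℓ + ε * (C * ℓ)) := by
        gcongr
        rwa [div_le_iff₀ hN']

theorem admissibleDist_le_dist_of_subset_isClosed_null [MeasurableSpace E] [BorelSpace E]
    {μ : Measure E} [μ.IsAddRightInvariant] [SFinite μ] [μ.IsOpenPosMeasure] (hΘF : Θ ⊆ F)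
    (hF : IsClosed F) (hF0 : μ F = 0) (hC : 0 ≤ C)
    (hq : ∀ x y, admissibleDist Θ x y ≤ ENNReal.ofReal (C * dist x y))
    (x y : E) : admissibleDist Θ x y ≤ ENNReal.ofReal (dist x y) := by
  refine le_ofReal_of_forall_pos_le_ofReal_add_mul (by positivity : 0 ≤ 2 * C) fun ε hε => ?_
  obtain ⟨v, hv, hline⟩ := Measure.exists_mem_of_measure_ne_zero_of_ae
    (Metric.measure_ball_pos μ 0 hε).ne'
    (ae_restrict_of_ae (ae_volume_add_lineMap_mem_eq_zero hF.measurableSet hF0 x y))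
  have hshift : ∀ t : ℝ, lineMap (v + x) (v + y) t = v + lineMap x y t :=
    fun t => by simp only [lineMap_apply_module', add_sub_add_left_eq_sub]; abel
  have hv' : C * ‖v‖ ≤ C * ε := mul_le_mul_of_nonneg_left (mem_ball_zero_iff.1 hv).le hC
  calc admissibleDist Θ x y ≤ admissibleDist Θ x (v + x) + admissibleDist Θ (v + x) (v + y) +
        admissibleDist Θ (v + y) y :=
        admissibleDist_triangle.trans (by gcongr; exact admissibleDist_triangle)
    _ ≤ ENNReal.ofReal (C * ‖v‖) + ENNReal.ofReal (dist x y) + ENNReal.ofReal (C * ‖v‖) := by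
        gcongr
        · simpa using hq x (v + x)
        · simpa using admissibleDist_le_dist_of_volume_lineMap_mem_eq_zero hΘF hF hC hq (x := v + x)
            (y := v + y) (by simpa only [hshift] using hline)
        · simpa using hq (v + y) y
    _ ≤ ENNReal.ofReal (dist x y + ε * (2 * C)) := by
        rw [← ENNReal.ofReal_add (by positivity) (by positivity),
          ← ENNReal.ofReal_add (by positivity) (by positivity)]
        exact ENNReal.ofReal_le_ofReal (by linarith)

end segment

section pathLen

variable {d : ℕ} (γ : ℝ → EuclideanSpace ℝ (Fin d)) {a b : ℝ}

theorem pathLen_le_eVariationOn : pathLen γ a b ≤ eVariationOn γ (Icc a b) := by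
  refine iSup_le fun n => iSup_le fun ⟨t, ht, ht0, htn⟩ => ?_
  -- freezing `t` after time `n` keeps it inside `[a, b]`
  have hmem : ∀ i, t (min i n) ∈ Icc a b := fun i =>
    ⟨ht0 ▸ ht (Nat.zero_le _), htn ▸ ht (min_le_right _ _)⟩
  calc ∑ i ∈ Finset.range n, ENNReal.ofReal ‖γ (t (i + 1)) - γ (t i)‖
      = ∑ i ∈ Finset.range n, edist (γ (t (min (i + 1) n))) (γ (t (min i n))) := by
        refine Finset.sum_congr rfl fun i hi => ?_
        rw [Finset.mem_range] at hi
        rw [min_eq_left hi, min_eq_left hi.le, edist_dist, dist_eq_norm]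
    _ ≤ eVariationOn γ (Icc a b) :=
        eVariationOn.sum_le (u := fun i => t (min i n))
          (fun i j hij => ht (min_le_min_right _ hij)) hmem

theorem eVariationOn_le_pathLen (hab : a ≤ b) : eVariationOn γ (Icc a b) ≤ pathLen γ a b := by
  refine iSup_le fun ⟨n, u, hu, us⟩ => ?_
  -- the partition `a, u 0, …, u n, b, b, …`
  let t : ℕ → ℝ := fun i => if i = 0 then a else if i ≤ n + 1 then u (i - 1) else b
  have ht : Monotone t := by
    refine monotone_nat_of_le_succ fun i => ?_
    simp only [t]
    split_ifs <;> first
      | contradiction | omega | exact le_rfl | exact hab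
      | exact (us _).1 | exact (us _).2 | exact hu (by omega)
  let g : ℕ → ℝ≥0∞ := fun i => ENNReal.ofReal ‖γ (t (i + 1)) - γ (t i)‖
  calc ∑ i ∈ Finset.range n, edist (γ (u (i + 1))) (γ (u i))
      = ∑ i ∈ Finset.range n, g (i + 1) := by
        refine Finset.sum_congr rfl fun i hi => ?_
        rw [Finset.mem_range] at hi
        simp only [g, t, if_neg (Nat.succ_ne_zero _), if_pos (show i + 1 ≤ n + 1 by omega),
          if_pos (show i + 1 + 1 ≤ n + 1 by omega), Nat.add_sub_cancel, edist_dist, dist_eq_norm]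
    _ ≤ ∑ i ∈ Finset.range (n + 1), g (i + 1) :=
        Finset.sum_le_sum_of_subset (Finset.range_subset_range.2 n.le_succ)
    _ ≤ ∑ i ∈ Finset.range (n + 2), g i := by
        rw [Finset.sum_range_succ' g (n + 1)]
        exact le_self_add
    _ ≤ pathLen γ a b :=
        le_iSup₂_of_le (f := fun n (t : {t : ℕ → ℝ // Monotone t ∧ t 0 = a ∧ t n = b}) =>
          ∑ i ∈ Finset.range n, ENNReal.ofReal ‖γ (t.1 (i + 1)) - γ (t.1 i)‖) (n + 2)
          ⟨t, ht, rfl, by simp [t]⟩ le_rfl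

theorem pathLen_eq_eVariationOn (hab : a ≤ b) : pathLen γ a b = eVariationOn γ (Icc a b) :=
  (pathLen_le_eVariationOn γ).antisymm (eVariationOn_le_pathLen γ hab)

end pathLen

section euclidean

variable {d : ℕ} {Θ : Set (EuclideanSpace ℝ (Fin d))}

theorem admissibleDist_le_of_forall_exists_pathLen_le {C : ℝ}
    (hqp : ∀ x y : EuclideanSpace ℝ (Fin d), ∀ δ : ℝ, 0 < δ →
      ∃ (a b : ℝ) (γ : ℝ → EuclideanSpace ℝ (Fin d)),
        a < b ∧ ContinuousOn γ (Set.Icc a b) ∧ γ a = x ∧ γ b = y ∧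
        pathLen γ a b ≤ ENNReal.ofReal (C * ‖y - x‖ + δ) ∧
        (closure (γ '' Set.Icc a b ∩ Θ)).Countable)
    (x y : EuclideanSpace ℝ (Fin d)) :
    admissibleDist Θ x y ≤ ENNReal.ofReal (C * dist x y) := by
  refine le_ofReal_of_forall_pos_le_ofReal_add_mul zero_le_one fun δ hδ => ?_
  obtain ⟨a, b, γ, hab, hγ, ha, hb, hlen, hcount⟩ := hqp x y δ hδ
  calc admissibleDist Θ x y ≤ (⟨γ, a, b, hab, hγ, ha, hb, hcount⟩ : AdmissiblePath Θ x y).length :=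
        admissibleDist_le_length _
    _ = pathLen γ a b := (pathLen_eq_eVariationOn γ hab.le).symm
    _ ≤ ENNReal.ofReal (C * dist x y + δ * 1) := by rwa [mul_one, dist_eq_norm']

theorem permeable_of_admissibleDist_le
    (h : ∀ x y, admissibleDist Θ x y ≤ ENNReal.ofReal (dist x y)) : Permeable Θ := by
  intro x y δ hδ
  have hlt : admissibleDist Θ x y < ENNReal.ofReal (‖y - x‖ + δ) :=
    (h x y).trans_lt <| (ENNReal.ofReal_lt_ofReal_iff (by positivity)).2
      (by linarith [dist_eq_norm' x y])
  obtain ⟨γ, hγ⟩ := iInf_lt_iff.1 hlt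
  exact ⟨γ.left, γ.right, γ.toFun, γ.left_lt_right, γ.continuousOn, γ.source, γ.target,
    (pathLen_eq_eVariationOn _ γ.left_lt_right.le).trans_le hγ.le, γ.countable_closure_inter⟩

end euclidean

/-- If `Θ ⊆ ℝ^d` is `C`-quasi permeable (any two points can be joined, for every `δ > 0`,
by a path of length at most `C‖y-x‖ + δ` whose intersection with `Θ` has countable closure)
and `Θ` is contained in a closed Lebesgue nullset, then `Θ` is permeable. -/
theorem permeable_of_quasiPermeable_subset_closed_nullset {d : ℕ}
    (Θ : Set (EuclideanSpace ℝ (Fin d))) (C : ℝ) (hC : 1 ≤ C)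
    (hqp : ∀ x y : EuclideanSpace ℝ (Fin d), ∀ δ : ℝ, 0 < δ →
      ∃ (a b : ℝ) (γ : ℝ → EuclideanSpace ℝ (Fin d)),
        a < b ∧ ContinuousOn γ (Set.Icc a b) ∧ γ a = x ∧ γ b = y ∧
        pathLen γ a b ≤ ENNReal.ofReal (C * ‖y - x‖ + δ) ∧
        (closure (γ '' Set.Icc a b ∩ Θ)).Countable)
    (hsub : ∃ F : Set (EuclideanSpace ℝ (Fin d)), IsClosed F ∧ volume F = 0 ∧ Θ ⊆ F) :
    Permeable Θ := by
  obtain ⟨F, hF, hF0, hΘF⟩ := hsub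
  exact permeable_of_admissibleDist_le <| admissibleDist_le_dist_of_subset_isClosed_null hΘF hF
    hF0 (zero_le_one.trans hC) (admissibleDist_le_of_forall_exists_pathLen_le hqp)
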